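/- The Fisher information matrix of the family F₃ with density f(x,y;α₁,α₂)=α₁(α₁+α₂)e^{-(α₁+α₂)y} on 0<x<y, α₂(α₁+α₂)e^{-(α₁+α₂)x} on 0<y<x, is [[ (2α₁+α₂)/(α₁(α₁+α₂)²), 1/(α₁+α₂)² ], [ 1/(α₁+α₂)², (α₁+2α₂)/(α₂(α₁+α₂)²) ]]. -/

import Mathlib

open MeasureTheory Real

/-- Density of the Freund submanifold `F₃`, with parameters `p = (α₁, α₂)`. -/
noncomputable def freundF3 (p : Fin 2 → ℝ) (x y : ℝ) : ℝ :=
  if 0 < x ∧ x < y then p 0 * (p 0 + p 1) * Real.exp (-(p 0 + p 1) * y)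
  else if 0 < y ∧ y < x then p 1 * (p 0 + p 1) * Real.exp (-(p 0 + p 1) * x)
  else 0

/-- Partial derivative in the `i`-th parameter. -/
noncomputable def pd (i : Fin 2) (F : (Fin 2 → ℝ) → ℝ) (p : Fin 2 → ℝ) : ℝ :=
  deriv (fun t => F (Function.update p i t)) (p i)

/-- Fisher information `g_ij = −E[∂ᵢ∂ⱼ log f]`. -/
noncomputable def fisherF3 (p : Fin 2 → ℝ) (i j : Fin 2) : ℝ :=
  -∫ x in Set.Ioi (0:ℝ), ∫ y in Set.Ioi (0:ℝ),
      pd i (pd j (fun q => Real.log (freundF3 q x y))) p * freundF3 p x y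


/-! On each of the regions `0 < x < y` and `0 < y < x`, and for parameters `q` near a positive
`p`, `log f` is `log q_k + log (q₀ + q₁) - (q₀ + q₁) c` with `k` and `c` fixed by the region.
Its Hessian is therefore constant on each region, `-δᵢₖ δⱼₖ / p_k² - 1 / (p₀ + p₁)²`, and the
Fisher matrix is minus the average of these two constants, weighted by the probabilities
`p₀ / (p₀ + p₁)` and `p₁ / (p₀ + p₁)` of the two regions. -/

open Set Filter Topology

section PartialDerivatives

variable {F G : (Fin 2 → ℝ) → ℝ} {p : Fin 2 → ℝ}

lemma pd_congr (i : Fin 2) (h : F =ᶠ[𝓝 p] G) : pd i F p = pd i G p := by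
  refine EventuallyEq.deriv_eq ?_
  have : Tendsto (Function.update p i) (𝓝 (p i)) (𝓝 p) := by
    simpa using ((continuous_const (y := p)).update i continuous_id).tendsto (p i)
  exact this.eventually h

lemma pd_pd_congr (i j : Fin 2) (h : F =ᶠ[𝓝 p] G) : pd i (pd j F) p = pd i (pd j G) p :=
  pd_congr i (h.eventuallyEq_nhds.mono fun _ hq => pd_congr j hq)

lemma hasDerivAt_update_apply (p : Fin 2 → ℝ) (i k : Fin 2) :
    HasDerivAt (fun t => Function.update p i t k) ((Pi.single i 1 : Fin 2 → ℝ) k) (p i) :=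
  hasDerivAt_pi.1 (hasDerivAt_update p i (p i)) k

lemma eventually_forall_pos_nhds (hp : ∀ k, 0 < p k) : ∀ᶠ q in 𝓝 p, ∀ k, 0 < q k :=
  eventually_all.2 fun k => (continuous_apply k).continuousAt.eventually (lt_mem_nhds (hp k))

end PartialDerivatives

/-- The logarithm of the density of `F₃` on `0 < x < y` is `freundF3LogBranch 0 y`, on
`0 < y < x` it is `freundF3LogBranch 1 x`. -/
noncomputable def freundF3LogBranch (k : Fin 2) (c : ℝ) (q : Fin 2 → ℝ) : ℝ :=
  log (q k) + log (q 0 + q 1) - (q 0 + q 1) * c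

section LogBranch

variable {x y : ℝ} {q : Fin 2 → ℝ}

lemma log_freundF3_of_lt (hx : 0 < x) (hxy : x < y) (hq : ∀ k, 0 < q k) :
    log (freundF3 q x y) = freundF3LogBranch 0 y q := by
  have hs : 0 < q 0 + q 1 := add_pos (hq 0) (hq 1)
  rw [freundF3, if_pos ⟨hx, hxy⟩, log_mul (mul_pos (hq 0) hs).ne' (exp_ne_zero _),
    log_mul (hq 0).ne' hs.ne', log_exp, freundF3LogBranch]
  ring

lemma log_freundF3_of_gt (hy : 0 < y) (hyx : y < x) (hq : ∀ k, 0 < q k) :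
    log (freundF3 q x y) = freundF3LogBranch 1 x q := by
  have hs : 0 < q 0 + q 1 := add_pos (hq 0) (hq 1)
  rw [freundF3, if_neg (by rintro ⟨-, h⟩; linarith), if_pos ⟨hy, hyx⟩,
    log_mul (mul_pos (hq 1) hs).ne' (exp_ne_zero _), log_mul (hq 1).ne' hs.ne', log_exp,
    freundF3LogBranch]
  ring

variable (k : Fin 2) (c : ℝ)

lemma pd_freundF3LogBranch (hq : ∀ l, 0 < q l) (j : Fin 2) :
    pd j (freundF3LogBranch k c) q
      = (Pi.single j 1 : Fin 2 → ℝ) k * (q k)⁻¹ + (q 0 + q 1)⁻¹ - c := by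
  have hs : q 0 + q 1 ≠ 0 := (add_pos (hq 0) (hq 1)).ne'
  have hsum := (hasDerivAt_update_apply q j 0).add (hasDerivAt_update_apply q j 1)
  have h := (((hasDerivAt_update_apply q j k).log (by simpa using (hq k).ne')).add
    (hsum.log (by simpa using hs))).sub (hsum.mul_const c)
  refine h.deriv.trans ?_
  fin_cases j <;> simp <;> ring

lemma pd_pd_freundF3LogBranch {p : Fin 2 → ℝ} (hp : ∀ l, 0 < p l) (i j : Fin 2) :
    pd i (pd j (freundF3LogBranch k c)) p
      = -((Pi.single j 1 : Fin 2 → ℝ) k * (Pi.single i 1 : Fin 2 → ℝ) k * (p k ^ 2)⁻¹)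
        - ((p 0 + p 1) ^ 2)⁻¹ := by
  have hs : p 0 + p 1 ≠ 0 := (add_pos (hp 0) (hp 1)).ne'
  rw [pd_congr i ((eventually_forall_pos_nhds hp).mono fun q hq => pd_freundF3LogBranch k c hq j)]
  have hsum := (hasDerivAt_update_apply p i 0).add (hasDerivAt_update_apply p i 1)
  have h := ((((hasDerivAt_update_apply p i k).inv (by simpa using (hp k).ne')).const_mul
    ((Pi.single j 1 : Fin 2 → ℝ) k)).add (hsum.inv (by simpa using hs))).sub_const c
  refine h.deriv.trans ?_
  fin_cases i <;> simp <;> ring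

variable {p : Fin 2 → ℝ}

lemma pd_pd_log_freundF3_of_lt (hp : ∀ k, 0 < p k) (hx : 0 < x) (hxy : x < y) (i j : Fin 2) :
    pd i (pd j (fun q => log (freundF3 q x y))) p = pd i (pd j (freundF3LogBranch 0 y)) p :=
  pd_pd_congr i j ((eventually_forall_pos_nhds hp).mono fun _ hq => log_freundF3_of_lt hx hxy hq)

lemma pd_pd_log_freundF3_of_gt (hp : ∀ k, 0 < p k) (hy : 0 < y) (hyx : y < x) (i j : Fin 2) :
    pd i (pd j (fun q => log (freundF3 q x y))) p = pd i (pd j (freundF3LogBranch 1 x)) p :=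
  pd_pd_congr i j ((eventually_forall_pos_nhds hp).mono fun _ hq => log_freundF3_of_gt hy hyx hq)

end LogBranch

section Expectation

variable {s : ℝ}

lemma integral_exp_neg_mul_Ioi (hs : 0 < s) (a : ℝ) :
    ∫ u in Ioi a, exp (-s * u) = exp (-s * a) / s := by
  rw [integral_exp_mul_Ioi (neg_lt_zero.2 hs), neg_div_neg_eq]

lemma integral_mul_exp_neg_mul_Ioi (hs : 0 < s) :
    ∫ u in Ioi (0 : ℝ), u * exp (-s * u) = 1 / s ^ 2 := by
  have h := integral_rpow_mul_exp_neg_mul_Ioi two_pos hs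
  norm_num [Gamma_two, rpow_two] at h
  simpa [neg_mul] using h

lemma integrableOn_mul_exp_neg_mul_Ioi (hs : 0 < s) :
    IntegrableOn (fun u => u * exp (-s * u)) (Ioi 0) :=
  Integrable.of_integral_ne_zero (by rw [integral_mul_exp_neg_mul_Ioi hs]; positivity)

variable {p : Fin 2 → ℝ} {G : ℝ → ℝ → ℝ} {a b : ℝ}

lemma integral_mul_freundF3_Ioi (hs : 0 < p 0 + p 1)
    (hG₀ : ∀ x y, 0 < x → x < y → G x y = a) (hG₁ : ∀ x y, 0 < y → y < x → G x y = b)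
    {x : ℝ} (hx : 0 < x) :
    ∫ y in Ioi 0, G x y * freundF3 p x y
      = a * p 0 * exp (-(p 0 + p 1) * x)
        + b * p 1 * (p 0 + p 1) * (x * exp (-(p 0 + p 1) * x)) := by
  have below : EqOn (fun y => G x y * freundF3 p x y)
      (fun _ => b * (p 1 * (p 0 + p 1) * exp (-(p 0 + p 1) * x))) (Ioo 0 x) := fun y hy => by
    dsimp only
    rw [hG₁ x y hy.1 hy.2, freundF3, if_neg fun h => hy.2.not_gt h.2, if_pos ⟨hy.1, hy.2⟩]
  have above : EqOn (fun y => G x y * freundF3 p x y)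
      (fun y => a * (p 0 * (p 0 + p 1)) * exp (-(p 0 + p 1) * y)) (Ioi x) := fun y hy => by
    dsimp only
    rw [hG₀ x y hx hy, freundF3, if_pos ⟨hx, hy⟩]
    ring
  have int_below : IntegrableOn (fun y => G x y * freundF3 p x y) (Ioo 0 x) :=
    (integrableOn_const measure_Ioo_lt_top.ne).congr_fun below.symm measurableSet_Ioo
  have int_above : IntegrableOn (fun y => G x y * freundF3 p x y) (Ici x) := by
    rw [integrableOn_Ici_iff_integrableOn_Ioi]
    exact IntegrableOn.congr_fun ((exp_neg_integrableOn_Ioi x hs).const_mul _) above.symm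
      measurableSet_Ioi
  have disjoint : Disjoint (Ioo 0 x) (Ici x) :=
    (Iio_disjoint_Ici le_rfl).mono_left Ioo_subset_Iio_self
  rw [← Ioo_union_Ici_eq_Ioi hx, setIntegral_union disjoint measurableSet_Ici int_below int_above,
    integral_Ici_eq_integral_Ioi,
    setIntegral_congr_fun measurableSet_Ioo below, setIntegral_congr_fun measurableSet_Ioi above,
    setIntegral_const, integral_const_mul, integral_exp_neg_mul_Ioi hs,
    volume_real_Ioo_of_le hx.le, smul_eq_mul]
  field_simp
  ring

lemma integral_integral_mul_freundF3 (hs : 0 < p 0 + p 1)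
    (hG₀ : ∀ x y, 0 < x → x < y → G x y = a) (hG₁ : ∀ x y, 0 < y → y < x → G x y = b) :
    ∫ x in Ioi 0, ∫ y in Ioi 0, G x y * freundF3 p x y = (a * p 0 + b * p 1) / (p 0 + p 1) := by
  rw [setIntegral_congr_fun measurableSet_Ioi fun x hx => integral_mul_freundF3_Ioi hs hG₀ hG₁ hx,
    integral_add ((exp_neg_integrableOn_Ioi 0 hs).const_mul _)
      ((integrableOn_mul_exp_neg_mul_Ioi hs).const_mul _),
    integral_const_mul, integral_const_mul, integral_exp_neg_mul_Ioi hs,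
    integral_mul_exp_neg_mul_Ioi hs, mul_zero, exp_zero]
  field_simp

end Expectation

theorem freundF3_fisher_matrix (p : Fin 2 → ℝ) (hp : ∀ i, 0 < p i) :
    ∀ i j : Fin 2, fisherF3 p i j =
      !![(2 * p 0 + p 1) / (p 0 * (p 0 + p 1) ^ 2), 1 / (p 0 + p 1) ^ 2;
         1 / (p 0 + p 1) ^ 2, (p 0 + 2 * p 1) / (p 1 * (p 0 + p 1) ^ 2)] i j := by
  intro i j
  have hs : 0 < p 0 + p 1 := add_pos (hp 0) (hp 1)
  rw [fisherF3, integral_integral_mul_freundF3 hs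
    (fun x y hx hxy => (pd_pd_log_freundF3_of_lt hp hx hxy i j).trans
      (pd_pd_freundF3LogBranch 0 y hp i j))
    (fun x y hy hyx => (pd_pd_log_freundF3_of_gt hp hy hyx i j).trans
      (pd_pd_freundF3LogBranch 1 x hp i j))]
  have h₀ := hp 0
  have h₁ := hp 1
  fin_cases i <;> fin_cases j <;> simp <;> field_simp <;> ring
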